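/- arXiv:math/0703194 — 2 statements merged into one kernel-verified Lean document; each statement's English description precedes it below -/
import Mathlib

section
/- Let n ≥ 2, p > 1, l ∈ ℕ, and let f : ℝⁿ → R̄ⁿ be any map. If a sequence (x_m) in ℝⁿ ∖ {0} with |x_m| → ∞ is a μ_p-sequence for f with parameter l, then (x_m) is an M_p-sequence for f with parameter l. -/
open Filter Topology Set
open scoped ENNReal NNReal

noncomputable section

/-- `E n` is the Euclidean space `ℝⁿ`. -/
abbrev E (n : ℕ) := EuclideanSpace ℝ (Fin n)

/-- `RS n` is the one-point compactification `R̄ⁿ = ℝⁿ ∪ {∞}`, with `none` playing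
the role of the point `∞`. -/
abbrev RS (n : ℕ) := Option (E n)

/-- The chordal (spherical) distance `q` on `R̄ⁿ`. -/
noncomputable def chordal {n : ℕ} : RS n → RS n → ℝ
  | some a, some b => ‖a - b‖ / (Real.sqrt (1 + ‖a‖ ^ 2) * Real.sqrt (1 + ‖b‖ ^ 2))
  | some a, none => 1 / Real.sqrt (1 + ‖a‖ ^ 2)
  | none, some b => 1 / Real.sqrt (1 + ‖b‖ ^ 2)
  | none, none => 0

/-- The chordal diameter of a subset of `R̄ⁿ`. -/
noncomputable def qdiam {n : ℕ} (S : Set (RS n)) : ℝ :=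
  sSup {d | ∃ a ∈ S, ∃ b ∈ S, d = chordal a b}

/-- The weighted ball `B_p(a, r) = {x : |x - a| < r |a|^(2-p)}`. -/
def Bp {n : ℕ} (p : ℝ) (a : E n) (r : ℝ) : Set (E n) :=
  {x | ‖x - a‖ < r * ‖a‖ ^ (2 - p)}

/-- `Qq α g x = limsup_{h → 0, h ≠ 0} q(g(x+h), g(x)) / |h|^α ∈ [0,∞]`. -/
noncomputable def Qq {n : ℕ} (α : ℝ) (g : E n → RS n) (x : E n) : ℝ≥0∞ :=
  Filter.limsup (fun h : E n => ENNReal.ofReal (chordal (g (x + h)) (g x) / ‖h‖ ^ α))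
    (𝓝[≠] (0 : E n))

/-- `(x_m)` is an `M_p`-sequence for `f` with parameter `l`:  `x_m ∈ ℝⁿ \ {0}`,
`|x_m| → ∞`, and for every subsequence and every `δ > 0` the set of values
`c ∈ R̄ⁿ` attained only finitely often by `f` in `⋃_k B_p(x_{m_k}, δ)` has at
most `l` elements. -/
def MpSeq {n : ℕ} (p : ℝ) (l : ℕ) (f : E n → RS n) (x : ℕ → E n) : Prop :=
  (∀ m, x m ≠ 0) ∧ Tendsto (fun m => ‖x m‖) atTop atTop ∧
    ∀ φ : ℕ → ℕ, StrictMono φ → ∀ δ : ℝ, 0 < δ →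
      {c : RS n | (f ⁻¹' {c} ∩ ⋃ k, Bp p (x (φ k)) δ).Finite}.Finite ∧
      {c : RS n | (f ⁻¹' {c} ∩ ⋃ k, Bp p (x (φ k)) δ).Finite}.ncard ≤ l

/-- `(x_m)` is a `μ_p`-sequence for `f` with parameter `l`: `x_m ∈ ℝⁿ \ {0}`,
`|x_m| → ∞`, and there are monotone decreasing null sequences `(L_m)`, `(r_m)` of
positive numbers such that `f(B_p(x_m, r_m))` covers `R̄ⁿ` except possibly `l`
sets of chordal diameter at most `L_m`. -/
def MuSeq {n : ℕ} (p : ℝ) (l : ℕ) (f : E n → RS n) (x : ℕ → E n) : Prop :=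
  (∀ m, x m ≠ 0) ∧ Tendsto (fun m => ‖x m‖) atTop atTop ∧
    ∃ L r : ℕ → ℝ, (∀ m, 0 < L m) ∧ (∀ m, 0 < r m) ∧ Antitone L ∧ Antitone r ∧
      Tendsto L atTop (𝓝 0) ∧ Tendsto r atTop (𝓝 0) ∧
      ∀ m, ∃ Es : Fin l → Set (RS n), (∀ j, qdiam (Es j) ≤ L m) ∧
        ∀ c : RS n, c ∉ ⋃ j, Es j → c ∈ f '' Bp p (x m) (r m)

/-- Continuity of `g : ℝⁿ → R̄ⁿ` at a point, with respect to the chordal distance. -/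
def QContinuousAt {n : ℕ} (g : E n → RS n) (x₀ : E n) : Prop :=
  ∀ ε : ℝ, 0 < ε → ∃ δ : ℝ, 0 < δ ∧ ∀ z : E n, ‖z - x₀‖ < δ → chordal (g z) (g x₀) < ε


/-!
Since `p > 1`, the weighted ball `B_p(a, R)` lies outside the ball of radius
`|a| - R |a|^(2-p) → ∞`, so every fixed point eventually leaves `B_p(x_{m_k}, δ)`.
A value `c` taken only finitely often in `⋃_k B_p(x_{m_k}, δ)` is therefore eventually not
taken in `B_p(x_{m_k}, r_{m_k}) ⊆ B_p(x_{m_k}, δ)` at all, hence lies in one of the `l`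
exceptional sets of chordal diameter `≤ L_{m_k} → 0`. Once `L_{m_k}` is below the minimal chordal
separation of `l + 1` such values, two of them would share an exceptional set.
-/

theorem tendsto_sub_mul_rpow_atTop {p : ℝ} (hp : 1 < p) (R : ℝ) :
    Tendsto (fun t : ℝ => t - R * t ^ (2 - p)) atTop atTop := by
  have hsmall : Tendsto (fun t : ℝ => 1 - R * t ^ (1 - p)) atTop (𝓝 1) := by
    have := (tendsto_rpow_neg_atTop (sub_pos.2 hp)).const_mul R |>.const_sub 1
    simpa [neg_sub] using this
  refine (tendsto_id.atTop_mul_pos one_pos hsmall).congr' ?_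
  filter_upwards [eventually_gt_atTop 0] with t ht
  rw [show (2 : ℝ) - p = (1 - p) + 1 by ring, Real.rpow_add_one ht.ne']
  simp only [id]
  ring

lemma Bp_mono {n : ℕ} {p r r' : ℝ} (a : E n) (h : r ≤ r') : Bp p a r ⊆ Bp p a r' :=
  fun _ hz => hz.trans_le (mul_le_mul_of_nonneg_right h (Real.rpow_nonneg (norm_nonneg a) _))

theorem eventually_notMem_Bp {ι : Type*} {l : Filter ι} {n : ℕ} {p : ℝ} (hp : 1 < p)
    {a : ι → E n} (ha : Tendsto (fun k => ‖a k‖) l atTop) (R : ℝ) (y : E n) :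
    ∀ᶠ k in l, y ∉ Bp p (a k) R := by
  filter_upwards [((tendsto_sub_mul_rpow_atTop hp R).comp ha).eventually_gt_atTop ‖y‖]
    with k hk hy
  have hy' : ‖y - a k‖ < R * ‖a k‖ ^ (2 - p) := hy
  have := norm_sub_norm_le (a k) y
  rw [norm_sub_rev] at this
  simp only [Function.comp_apply] at hk
  linarith

lemma one_le_sqrt_one_add_sq (t : ℝ) : 1 ≤ √(1 + t ^ 2) :=
  Real.one_le_sqrt.2 (le_add_of_nonneg_right (sq_nonneg t))

lemma chordal_le_one {n : ℕ} (a b : RS n) : chordal a b ≤ 1 := by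
  match a, b with
  | none, none => simp [chordal]
  | some a, none => exact div_le_one_of_le₀ (one_le_sqrt_one_add_sq _) (Real.sqrt_nonneg _)
  | none, some b => exact div_le_one_of_le₀ (one_le_sqrt_one_add_sq _) (Real.sqrt_nonneg _)
  | some a, some b =>
    refine div_le_one_of_le₀ ((norm_sub_le a b).trans ?_) (by positivity)
    rw [← Real.sqrt_mul (by positivity), Real.le_sqrt (by positivity) (by positivity)]
    nlinarith [sq_nonneg (‖a‖ * ‖b‖ - 1)]

lemma chordal_pos {n : ℕ} {a b : RS n} (hab : a ≠ b) : 0 < chordal a b := by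
  match a, b with
  | none, none => exact absurd rfl hab
  | some a, none => simp only [chordal]; positivity
  | none, some b => simp only [chordal]; positivity
  | some a, some b =>
    have : 0 < ‖a - b‖ := norm_pos_iff.2 (sub_ne_zero_of_ne fun h => hab (congrArg some h))
    simp only [chordal]
    positivity

lemma chordal_le_qdiam {n : ℕ} {S : Set (RS n)} {a b : RS n} (ha : a ∈ S) (hb : b ∈ S) :
    chordal a b ≤ qdiam S :=
  le_csSup ⟨1, by rintro d ⟨a', -, b', -, rfl⟩; exact chordal_le_one a' b'⟩ ⟨a, ha, b, hb, rfl⟩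

theorem Finset.card_le_of_eventually_mem_small {n l : ℕ} {L : ℕ → ℝ} (hL : Tendsto L atTop (𝓝 0))
    {Es : ℕ → Fin l → Set (RS n)} (hdiam : ∀ k j, qdiam (Es k j) ≤ L k) {T : Finset (RS n)}
    (hT : ∀ c ∈ T, ∀ᶠ k in atTop, c ∈ ⋃ j, Es k j) : T.card ≤ l := by
  have hsep : ∀ᶠ k in atTop, ∀ c ∈ T, ∀ c' ∈ T, c ≠ c' → L k < chordal c c' := by
    simp only [eventually_all_finset]
    intro c _ c' _
    by_cases hcc' : c = c'
    · exact Eventually.of_forall fun _ h => (h hcc').elim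
    · filter_upwards [hL.eventually (eventually_lt_nhds (chordal_pos hcc'))] with k hk _ using hk
  obtain ⟨k, hcov, hsep⟩ := ((eventually_all_finset T).2 hT |>.and hsep).exists
  choose j hj using fun c : T => mem_iUnion.1 (hcov c c.2)
  have hj_inj : Function.Injective j := by
    intro c c' hcc'
    by_contra hne
    have hsame : chordal (c : RS n) c' ≤ L k :=
      (chordal_le_qdiam (hj c) (by rw [hcc']; exact hj c')).trans (hdiam k (j c))
    exact (hsep c c.2 c' c'.2 (Subtype.coe_ne_coe.2 hne)).not_ge hsame
  simpa using Fintype.card_le_of_injective j hj_inj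

theorem Set.finite_and_ncard_le_of_eventually_mem_small {n l : ℕ} {L : ℕ → ℝ}
    (hL : Tendsto L atTop (𝓝 0)) {Es : ℕ → Fin l → Set (RS n)}
    (hdiam : ∀ k j, qdiam (Es k j) ≤ L k) {S : Set (RS n)}
    (hS : ∀ c ∈ S, ∀ᶠ k in atTop, c ∈ ⋃ j, Es k j) : S.Finite ∧ S.ncard ≤ l := by
  have hsub : ∀ T : Finset (RS n), ↑T ⊆ S → T.card ≤ l := fun T hT =>
    Finset.card_le_of_eventually_mem_small hL hdiam fun c hc => hS c (hT hc)
  have hfin : S.Finite := by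
    by_contra hinf
    obtain ⟨T, hTS, hTcard⟩ := Set.Infinite.exists_subset_card_eq hinf (l + 1)
    have := hsub T hTS
    omega
  refine ⟨hfin, ?_⟩
  rw [Set.ncard_eq_toFinset_card S hfin]
  exact hsub _ (by simp)

theorem stmt_7_general (n : ℕ) (p : ℝ) (hp : 1 < p) (l : ℕ)
    (f : E n → RS n) (x : ℕ → E n) (hMu : MuSeq p l f x) :
    MpSeq p l f x := by
  obtain ⟨hx0, hx_top, L, r, -, -, -, -, hL, hr, hcover⟩ := hMu
  choose Es hEs_diam hEs_cover using hcover
  refine ⟨hx0, hx_top, fun φ hφ δ hδ => ?_⟩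
  have hφ_top := hφ.tendsto_atTop
  refine Set.finite_and_ncard_le_of_eventually_mem_small (hL.comp hφ_top)
    (fun k => hEs_diam (φ k)) fun c hc => ?_
  have hleave : ∀ᶠ k in atTop, ∀ y ∈ f ⁻¹' {c} ∩ ⋃ k, Bp p (x (φ k)) δ,
      y ∉ Bp p (x (φ k)) δ :=
    (eventually_all_finite hc).2 fun y _ => eventually_notMem_Bp hp (hx_top.comp hφ_top) δ y
  filter_upwards [hleave, (hr.comp hφ_top).eventually (eventually_le_nhds hδ)] with k hk hrk
  by_contra hc_small
  obtain ⟨y, hy, hyc⟩ := hEs_cover (φ k) c hc_small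
  have hyδ := Bp_mono (x (φ k)) hrk hy
  exact hk y ⟨hyc, mem_iUnion.2 ⟨k, hyδ⟩⟩ hyδ

/-- Every `μ_p`-sequence for `f` with parameter `l` is an `M_p`-sequence
for `f` with parameter `l` (`p > 1`). -/
theorem stmt_7 (n : ℕ) (hn : 2 ≤ n) (p : ℝ) (hp : 1 < p) (l : ℕ)
    (f : E n → RS n) (x : ℕ → E n) (hMu : MuSeq p l f x) :
    MpSeq p l f x :=
  stmt_7_general n p hp l f x hMu
end
end

section
/- Let n ≥ 2, p > 1, l ∈ ℕ, and let f : ℝⁿ → R̄ⁿ be any map. Let (x_m) be a sequence in ℝⁿ ∖ {0} with |x_m| → ∞. Suppose there exist a subsequence (x_{m_j}), a radius r > 0, and a map g : ℝⁿ → R̄ⁿ continuous at 0 (with respect to the chordal distance q) such that the maps x ↦ f(x_{m_j} + |x_{m_j}|^{2−p} x) converge to g uniformly with respect to q on the closed ball {x : |x| ≤ r}. Then (x_m) is not an M_p-sequence for f with parameter l. -/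
open Filter Topology Set
open scoped ENNReal NNReal

noncomputable section

/-!
For some `ε > 0` infinitely many values of `R̄ⁿ` lie at chordal distance at least `ε` from `g 0`.
Uniform convergence of the rescaled maps and continuity of `g` at `0` keep `f` within `ε` of
`g 0` on `B_p(x_{m_j}, δ)` for all large `j` and small `δ`, so `f` omits all those values on the
union of these balls, whereas an `M_p`-sequence omits only finitely many values there.
-/

section Chordal

variable {n : ℕ}

lemma chordal_nonneg (a b : RS n) : 0 ≤ chordal a b := by
  cases a <;> cases b <;> simp only [chordal] <;> positivity

lemma chordal_comm (a b : RS n) : chordal a b = chordal b a := by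
  cases a <;> cases b <;> simp only [chordal, norm_sub_rev, mul_comm]

/-- Inverse stereographic projection of `R̄ⁿ` onto the unit sphere of `ℝⁿ × ℝ`. -/
def stereo : RS n → WithLp 2 (E n × ℝ)
  | some a => WithLp.toLp 2 ((2 / (1 + ‖a‖ ^ 2)) • a, (‖a‖ ^ 2 - 1) / (‖a‖ ^ 2 + 1))
  | none => WithLp.toLp 2 (0, 1)

lemma sq_sqrt_one_add_sq (t : ℝ) : √(1 + t ^ 2) ^ 2 = 1 + t ^ 2 := Real.sq_sqrt (by positivity)

lemma norm_stereo_sub_stereo (a b : RS n) : ‖stereo a - stereo b‖ = 2 * chordal a b := by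
  refine (sq_eq_sq₀ (norm_nonneg _) (by linarith [chordal_nonneg a b])).mp ?_
  rw [WithLp.prod_norm_sq_eq_of_L2]
  cases a <;> cases b <;>
    simp only [stereo, chordal, WithLp.sub_fst, WithLp.sub_snd, WithLp.toLp_fst,
      WithLp.toLp_snd, norm_sub_sq_real, norm_smul, real_inner_smul_left, real_inner_smul_right,
      Real.norm_eq_abs, abs_div, abs_two, mul_pow, sq_abs, div_pow, sq_sqrt_one_add_sq, sub_zero,
      zero_sub, norm_neg, sub_self, WithLp.zero_fst, WithLp.zero_snd, norm_zero] <;>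
    field_simp <;> ring

lemma chordal_triangle (a b c : RS n) : chordal a b ≤ chordal a c + chordal c b := by
  have := norm_sub_le_norm_sub_add_norm_sub (stereo a) (stereo c) (stereo b)
  rw [norm_stereo_sub_stereo, norm_stereo_sub_stereo, norm_stereo_sub_stereo] at this
  linarith

lemma div_one_add_sq_le_chordal {a b : E n} {R : ℝ} (ha : ‖a‖ ≤ R) (hb : ‖b‖ ≤ R) :
    ‖a - b‖ / (1 + R ^ 2) ≤ chordal (some a) (some b) := by
  have hR : 0 ≤ R := (norm_nonneg a).trans ha
  have hden : √(1 + ‖a‖ ^ 2) * √(1 + ‖b‖ ^ 2) ≤ 1 + R ^ 2 := by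
    rw [← Real.sqrt_mul (by positivity), ← Real.sqrt_sq (by positivity : 0 ≤ 1 + R ^ 2),
      sq (1 + R ^ 2)]
    gcongr
  exact div_le_div_of_nonneg_left (norm_nonneg _) (by positivity) hden

/-- The arcs `{t • v | t ∈ [0, 1]}` and `{t • v | t ∈ [2, 3]}` of a ray are at chordal distance
at least `1 / 10` from each other, so one of them stays `1 / 20` away from any given point. -/
lemma exists_pos_infinite_setOf_le_chordal [Nontrivial (E n)] (a : RS n) :
    ∃ ε > 0, {c : RS n | ε ≤ chordal c a}.Infinite := by
  obtain ⟨v, hv⟩ := exists_norm_eq (E n) zero_le_one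
  have hv0 : v ≠ 0 := norm_ne_zero_iff.mp (by simp [hv])
  let arc (s t : ℝ) : Set (RS n) := (fun u : ℝ => some (u • v)) '' Icc s t
  have arc_infinite {s t : ℝ} (hst : s < t) : (arc s t).Infinite :=
    (Set.Icc_infinite hst).image (Option.some_injective _ |>.comp (smul_left_injective ℝ hv0)).injOn
  have arc_sep : ∀ c ∈ arc 0 1, ∀ d ∈ arc 2 3, 1 / 10 ≤ chordal c d := by
    rintro _ ⟨s, hs, rfl⟩ _ ⟨t, ht, rfl⟩
    have hle {u : ℝ} (hu : u ∈ Icc (0 : ℝ) 3) : ‖u • v‖ ≤ 3 := by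
      rw [norm_smul, hv, mul_one, Real.norm_of_nonneg hu.1]; exact hu.2
    refine le_trans ?_
      (div_one_add_sq_le_chordal (hle ⟨hs.1, by linarith [hs.2]⟩) (hle ⟨by linarith [ht.1], ht.2⟩))
    rw [← sub_smul, norm_smul, hv, mul_one, Real.norm_eq_abs, abs_sub_comm,
      abs_of_pos (by linarith [hs.2, ht.1])]
    norm_num
    linarith [hs.2, ht.1]
  by_cases hnear : ∃ c ∈ arc 0 1, chordal c a < 1 / 20
  · obtain ⟨c, hc, hca⟩ := hnear
    refine ⟨1 / 20, by norm_num, (arc_infinite (by norm_num : (2 : ℝ) < 3)).mono ?_⟩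
    intro d hd
    show 1 / 20 ≤ chordal d a
    linarith [arc_sep c hc d hd, chordal_triangle c d a, chordal_comm a d]
  · push Not at hnear
    exact ⟨1 / 20, by norm_num, (arc_infinite (by norm_num : (0 : ℝ) < 1)).mono hnear⟩

end Chordal

lemma exists_eq_add_smul_of_mem_Bp {n : ℕ} {p δ : ℝ} {a y : E n} (hy : y ∈ Bp p a δ) :
    ∃ z : E n, ‖z‖ < δ ∧ y = a + ‖a‖ ^ (2 - p) • z := by
  set R := ‖a‖ ^ (2 - p)
  have hy : ‖y - a‖ < δ * R := hy
  have hδR : 0 < δ * R := (norm_nonneg _).trans_lt hy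
  have hR : 0 < R :=
    pos_of_mul_pos_right hδR (pos_of_mul_pos_left hδR (Real.rpow_nonneg (norm_nonneg a) _)).le
  refine ⟨R⁻¹ • (y - a), ?_, by rw [smul_inv_smul₀ hR.ne', add_sub_cancel]⟩
  rw [norm_smul, Real.norm_of_nonneg (inv_nonneg.2 hR.le), inv_mul_lt_iff₀ hR, mul_comm]
  exact hy

lemma setOf_le_chordal_subset_setOf_finite {n : ℕ} {f : E n → RS n} {U : Set (E n)} {a : RS n}
    {ε : ℝ} (hU : ∀ y ∈ U, chordal (f y) a < ε) :
    {c : RS n | ε ≤ chordal c a} ⊆ {c : RS n | (f ⁻¹' {c} ∩ U).Finite} := by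
  intro c hc
  refine Set.finite_empty.subset ?_
  rintro y ⟨rfl, hy⟩
  exact (hU y hy).not_ge hc

theorem stmt_8_general (n : ℕ) (p : ℝ) (l : ℕ)
    (f : E n → RS n) (x : ℕ → E n) (hx0 : ∀ m, x m ≠ 0)
    (φ : ℕ → ℕ) (hφ : StrictMono φ) (r : ℝ) (hr : 0 < r)
    (g : E n → RS n) (hg : QContinuousAt g 0)
    (hconv : ∀ ε : ℝ, 0 < ε → ∃ N : ℕ, ∀ j ≥ N, ∀ z : E n, ‖z‖ ≤ r →
      chordal (f (x (φ j) + ‖x (φ j)‖ ^ (2 - p) • z)) (g z) < ε) :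
    ¬ MpSeq p l f x := by
  rintro ⟨-, -, hM⟩
  have : Nontrivial (E n) := ⟨⟨x 0, 0, hx0 0⟩⟩
  obtain ⟨ε, hε, hfar⟩ := exists_pos_infinite_setOf_le_chordal (g 0)
  obtain ⟨δ, hδ, hgδ⟩ := hg (ε / 2) (half_pos hε)
  obtain ⟨N, hN⟩ := hconv (ε / 2) (half_pos hε)
  have hψ : StrictMono fun k => φ (k + N) := hφ.comp (strictMono_id.add_const N)
  have hnear : ∀ y ∈ ⋃ k, Bp p (x (φ (k + N))) (min δ r), chordal (f y) (g 0) < ε := by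
    simp only [mem_iUnion]
    rintro y ⟨k, hy⟩
    obtain ⟨z, hz, rfl⟩ := exists_eq_add_smul_of_mem_Bp hy
    calc _ ≤ chordal (f _) (g z) + chordal (g z) (g 0) := chordal_triangle _ _ _
      _ < ε / 2 + ε / 2 := by
        refine add_lt_add (hN _ (by omega) z (hz.trans_le (min_le_right _ _)).le) (hgδ z ?_)
        simpa using hz.trans_le (min_le_left _ _)
      _ = ε := add_halves ε
  exact hfar ((hM _ hψ _ (lt_min hδ hr)).1.subset (setOf_le_chordal_subset_setOf_finite hnear))

/-- If some rescaled subsequence `x ↦ f(x_{m_j} + |x_{m_j}|^(2-p) x)`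
converges uniformly on a closed ball `{|x| ≤ r}` (w.r.t. the chordal distance) to a
map `g` continuous at `0`, then `(x_m)` is not an `M_p`-sequence for `f`. -/
theorem stmt_8 (n : ℕ) (hn : 2 ≤ n) (p : ℝ) (hp : 1 < p) (l : ℕ)
    (f : E n → RS n) (x : ℕ → E n) (hx0 : ∀ m, x m ≠ 0)
    (hx : Tendsto (fun m => ‖x m‖) atTop atTop)
    (φ : ℕ → ℕ) (hφ : StrictMono φ) (r : ℝ) (hr : 0 < r)
    (g : E n → RS n) (hg : QContinuousAt g 0)
    (hconv : ∀ ε : ℝ, 0 < ε → ∃ N : ℕ, ∀ j ≥ N, ∀ z : E n, ‖z‖ ≤ r →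
      chordal (f (x (φ j) + ‖x (φ j)‖ ^ (2 - p) • z)) (g z) < ε) :
    ¬ MpSeq p l f x :=
  stmt_8_general n p l f x hx0 φ hφ r hr g hg hconv
end
end
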